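/- arXiv:1409.7033 — 2 statements merged into one kernel-verified Lean document; each statement's English description precedes it below -/
import Mathlib

section
/- Let D be a digraph with weight function c such that c is nearly conservative on every strongly connected component K of D, with component distance function d_K. Construct the digraph D* as follows: for each strongly connected component K with vertex set {x_1^K,…,x_r^K}, D* contains 2r vertices a_1^K,…,a_r^K, b_1^K,…,b_r^K and, for each 1 ≤ i,j ≤ r, an arc a_i^K b_j^K of weight d_K(x_i^K,x_j^K); and for every arc x_i^K x_j^L of D joining two distinct strongly connected components K ≠ L, D* contains the arc b_i^K a_j^L of weight c(x_i^K x_j^L). Then for any two vertices s = x_{i_0}^{K_0} and t = x_{j_r}^{K_r} lying in distinct strongly connected components K_0 ≠ K_r of D, the minimum weight of a directed path from s to t in D equals d_{D*}(a_{i_0}^{K_0}, b_{j_r}^{K_r}), the minimum weight of a directed path from a_{i_0}^{K_0} to b_{j_r}^{K_r} in D* (both being +∞ exactly when t is unreachable from s). -/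
namespace NearlyConservativePaper

variable {V : Type} [Fintype V] [DecidableEq V]

/-- A weighted digraph given by adjacency and arc weights. -/
structure WDigraph (V : Type) where
  Adj : V → V → Prop
  c : V → V → ℝ

/-- A step `(u, v, b)` of a walk: `b = false` means an original arc from `u` to `v`,
`b = true` means the added loose arc from `u` to `v`. -/
abbrev Step (V : Type) := V × V × Bool

/-- `IsWalk AS s t l`: `l` is a walk from `s` to `t` using arcs allowed by `AS`. -/
def IsWalk (AS : V → V → Bool → Prop) : V → V → List (Step V) → Prop
  | s, t, [] => s = t
  | s, t, (u, v, b) :: l => u = s ∧ AS u v b ∧ IsWalk AS v t l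

/-- The list of head-vertices of the steps of a walk. -/
def heads (l : List (Step V)) : List V := l.map fun a => a.2.1

/-- Total weight of a walk with respect to the step-weight `w`. -/
def wSum (w : V → V → Bool → ℝ) (l : List (Step V)) : ℝ :=
  (l.map fun a => w a.1 a.2.1 a.2.2).sum

/-- A directed cycle: a nonempty closed walk whose vertices are pairwise distinct. -/
def IsCycle (AS : V → V → Bool → Prop) (s : V) (l : List (Step V)) : Prop :=
  IsWalk AS s s l ∧ l ≠ [] ∧ (heads l).Nodup

/-- A directed (simple) path. -/
def IsPath (AS : V → V → Bool → Prop) (s t : V) (l : List (Step V)) : Prop :=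
  IsWalk AS s t l ∧ (s :: heads l).Nodup

/-- Nearly conservative: every negative directed cycle consists of exactly two arcs. -/
def NearlyCons (AS : V → V → Bool → Prop) (w : V → V → Bool → ℝ) : Prop :=
  ∀ s l, IsCycle AS s l → wSum w l < 0 → l.length = 2

/-- Minimum weight of a directed path from `s` to `t`, `+∞` if there is none. -/
noncomputable def distW (AS : V → V → Bool → Prop) (w : V → V → Bool → ℝ)
    (s t : V) : EReal :=
  sInf {x : EReal | ∃ l, IsPath AS s t l ∧ (wSum w l : EReal) = x}

namespace WDigraph

variable (D : WDigraph V)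

/-- The arc `uv` is special if `vu` is also an arc and `c(uv) + c(vu) < 0`. -/
def Special (u v : V) : Prop := D.Adj u v ∧ D.Adj v u ∧ D.c u v + D.c v u < 0

/-- The arcs of the original digraph `D` (only `b = false` steps). -/
def baseArcs (u v : V) (b : Bool) : Prop := b = false ∧ D.Adj u v

/-- The arcs of the improved digraph: original arcs and, for every special arc `vu`,
an added loose ordinary arc from `u` to `v`. -/
def ImpArc (u v : V) (b : Bool) : Prop := if b then D.Special v u else D.Adj u v

/-- The weight of a step of the improved digraph: the loose arc added for the
special arc `vu` has weight `-c(vu)`. -/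
def impW (u v : V) (b : Bool) : ℝ := if b then -(D.c v u) else D.c u v

/-- A walk is special-simple if it contains every special arc at most once and never
contains both a special arc and its opposite. -/
def SpecialSimple (l : List (Step V)) : Prop :=
  ∀ u v, D.Special u v → l.count (u, v, false) + l.count (v, u, false) ≤ 1

/-- The associated undirected graph `F`. -/
def F : SimpleGraph V where
  Adj u v := u ≠ v ∧ D.Special u v
  symm := by
    constructor
    rintro u v ⟨hne, h1, h2, h3⟩
    exact ⟨hne.symm, h2, h1, by linarith⟩
  loopless := by constructor; rintro u ⟨hne, -⟩; exact hne rfl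

/-- The weight of a walk of `F`, each edge being traversed as the special arc pointing
in the direction of the traversal. -/
def fWeight {s t : V} (p : D.F.Walk s t) : ℝ :=
  (p.darts.map fun d => D.c d.toProd.1 d.toProd.2).sum

/-- The improved digraph with the original (special) arcs in `Rem` removed. -/
def arcsMinus (Rem : V → V → Prop) (u v : V) (b : Bool) : Prop :=
  D.ImpArc u v b ∧ ¬ (b = false ∧ Rem u v)

end WDigraph

/-- The special arcs of the negative tree containing `t₀` (to be removed from `D`). -/
def remT (D : WDigraph V) (t₀ : V) : V → V → Prop :=
  fun x y => D.F.Adj x y ∧ D.F.Reachable t₀ x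

/-- Reachability in the digraph `D`. -/
def reach (D : WDigraph V) (s t : V) : Prop := ∃ l, IsWalk D.baseArcs s t l

/-- `x` and `y` lie in the same strongly connected component of `D`. -/
def SameSCC (D : WDigraph V) (x y : V) : Prop := reach D x y ∧ reach D y x

/-- The arcs of `D` inside the strongly connected component of `x`. -/
def sccArcs (D : WDigraph V) (x : V) : V → V → Bool → Prop :=
  fun u v b => b = false ∧ D.Adj u v ∧ SameSCC D u x ∧ SameSCC D v x

/-- The digraph `D*`: each strongly connected component `K` of `D` is replaced by two
copies of its vertex set (the `a`-copies `(x, false)` and the `b`-copies `(x, true)`);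
`D*` has an arc from `a_i^K` to `b_j^K` of weight `d_K(x_i^K, x_j^K)` for all `i, j`,
and an arc `b_i^K a_j^L` of weight `c(x_i^K x_j^L)` for every arc of `D` joining two
distinct strongly connected components `K ≠ L`. -/
noncomputable def Dstar (D : WDigraph V) : WDigraph (V × Bool) where
  Adj p q :=
    (p.2 = false ∧ q.2 = true ∧ SameSCC D p.1 q.1) ∨
    (p.2 = true ∧ q.2 = false ∧ D.Adj p.1 q.1 ∧ ¬ SameSCC D p.1 q.1)
  c p q :=
    if p.2 = false then (distW (sccArcs D p.1) D.impW p.1 q.1).toReal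
    else D.c p.1 q.1

set_option linter.unusedSectionVars false

section Aux

variable {AS AS' : V → V → Bool → Prop} {w : V → V → Bool → ℝ}

lemma isWalk_cons {a : Step V} {l : List (Step V)} {s t : V} :
    IsWalk AS s t (a :: l) ↔ a.1 = s ∧ AS a.1 a.2.1 a.2.2 ∧ IsWalk AS a.2.1 t l :=
  Iff.rfl

@[simp] lemma heads_nil : heads ([] : List (Step V)) = [] := rfl

@[simp] lemma heads_cons (a : Step V) (l : List (Step V)) :
    heads (a :: l) = a.2.1 :: heads l := rfl

@[simp] lemma heads_append (l1 l2 : List (Step V)) :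
    heads (l1 ++ l2) = heads l1 ++ heads l2 := List.map_append

@[simp] lemma wSum_nil : wSum w [] = 0 := rfl

@[simp] lemma wSum_cons (a : Step V) (l : List (Step V)) :
    wSum w (a :: l) = w a.1 a.2.1 a.2.2 + wSum w l := by simp [wSum]

@[simp] lemma wSum_append (l1 l2 : List (Step V)) :
    wSum w (l1 ++ l2) = wSum w l1 + wSum w l2 := by simp [wSum]

lemma isWalk_append {s m t : V} {l1 l2 : List (Step V)}
    (h1 : IsWalk AS s m l1) (h2 : IsWalk AS m t l2) : IsWalk AS s t (l1 ++ l2) := by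
  induction l1 generalizing s with
  | nil =>
    have hs : s = m := h1
    rw [hs]; exact h2
  | cons a l ih =>
    obtain ⟨h0, ha, hw⟩ := isWalk_cons.mp h1
    exact isWalk_cons.mpr ⟨h0, ha, ih hw⟩

lemma isWalk_mono (h : ∀ u v b, AS u v b → AS' u v b) {s t : V} {l : List (Step V)}
    (hw : IsWalk AS s t l) : IsWalk AS' s t l := by
  induction l generalizing s with
  | nil => exact hw
  | cons a l ih =>
    obtain ⟨h0, ha, hw'⟩ := isWalk_cons.mp hw
    exact isWalk_cons.mpr ⟨h0, h _ _ _ ha, ih hw'⟩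

lemma walk_end_mem {s t : V} {l : List (Step V)} (h : IsWalk AS s t l) (hne : l ≠ []) :
    t ∈ heads l := by
  induction l generalizing s with
  | nil => exact absurd rfl hne
  | cons a l ih =>
    obtain ⟨h0, ha, hw⟩ := isWalk_cons.mp h
    cases l with
    | nil =>
      have : a.2.1 = t := hw
      simp [this]
    | cons b l' => simpa using Or.inr (ih hw (by simp))

lemma walk_mem_split {s t v : V} {l : List (Step V)} (h : IsWalk AS s t l)
    (hv : v ∈ s :: heads l) :
    ∃ l1 l2, l = l1 ++ l2 ∧ IsWalk AS s v l1 ∧ IsWalk AS v t l2 := by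
  induction l generalizing s with
  | nil =>
    have : v = s := by simpa using hv
    exact ⟨[], [], rfl, this.symm, this ▸ h⟩
  | cons a l ih =>
    obtain ⟨h0, ha, hw⟩ := isWalk_cons.mp h
    rcases List.mem_cons.mp hv with hvs | hv'
    · exact ⟨[], a :: l, rfl, hvs.symm, hvs ▸ h⟩
    · obtain ⟨l1, l2, heq, hw1, hw2⟩ := ih hw (by simpa using hv')
      exact ⟨a :: l1, l2, by rw [heq]; rfl,
        isWalk_cons.mpr ⟨h0, ha, hw1⟩, hw2⟩

lemma walk_to_path {s t : V} {l : List (Step V)} (h : IsWalk AS s t l) :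
    ∃ l', IsPath AS s t l' := by
  induction l generalizing s with
  | nil =>
    exact ⟨[], h, by simp [heads]⟩
  | cons a l ih =>
    obtain ⟨h0, ha, hw⟩ := isWalk_cons.mp h
    obtain ⟨p, hp, hnd⟩ := ih hw
    by_cases hs : s ∈ a.2.1 :: heads p
    · obtain ⟨l1, l2, heq, hw1, hw2⟩ := walk_mem_split hp hs
      refine ⟨l2, hw2, ?_⟩
      cases l1 with
      | nil =>
        have has : a.2.1 = s := hw1
        rw [heq] at hnd
        rw [← has]
        simpa using hnd
      | cons b l1' =>
        have hse : s ∈ heads (b :: l1') := walk_end_mem hw1 (by simp)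
        rw [heq, heads_append] at hnd
        have hnd' := List.nodup_cons.mp hnd |>.2
        rw [List.nodup_append'] at hnd'
        refine List.nodup_cons.mpr ⟨fun hc => hnd'.2.2 hse hc, hnd'.2.1⟩
    · refine ⟨a :: p, isWalk_cons.mpr ⟨h0, ha, hp⟩, ?_⟩
      simpa using List.nodup_cons.mpr ⟨hs, hnd⟩

lemma distW_le {s t : V} {l : List (Step V)} (h : IsPath AS s t l) :
    distW AS w s t ≤ ((wSum w l : ℝ) : EReal) :=
  sInf_le ⟨l, h, rfl⟩

lemma distW_exists {s t : V} (h : ∃ l, IsPath AS s t l) :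
    ∃ l, IsPath AS s t l ∧ distW AS w s t = ((wSum w l : ℝ) : EReal) := by
  have hfin : {x : EReal | ∃ l, IsPath AS s t l ∧ ((wSum w l : ℝ) : EReal) = x}.Finite := by
    apply Set.Finite.subset
      (Set.Finite.image (fun l => ((wSum w l : ℝ) : EReal))
        (List.finite_length_le (Step V) (Fintype.card V)))
    rintro x ⟨l, hl, rfl⟩
    refine ⟨l, ?_, rfl⟩
    have h1 : (heads l).Nodup := List.Nodup.of_cons hl.2
    have h2 := h1.length_le_card
    simpa [heads] using h2
  have hne : {x : EReal | ∃ l, IsPath AS s t l ∧ ((wSum w l : ℝ) : EReal) = x}.Nonempty := by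
    obtain ⟨l, hl⟩ := h
    exact ⟨_, l, hl, rfl⟩
  obtain ⟨l, hl, he⟩ := Set.Nonempty.csInf_mem hne hfin
  exact ⟨l, hl, he.symm⟩

end Aux

section SCC

variable (D : WDigraph V)

lemma reach_refl (x : V) : reach D x x := ⟨[], rfl⟩

lemma reach_trans {x y z : V} (h1 : reach D x y) (h2 : reach D y z) : reach D x z := by
  obtain ⟨l1, h1⟩ := h1; obtain ⟨l2, h2⟩ := h2
  exact ⟨l1 ++ l2, isWalk_append h1 h2⟩

lemma reach_adj {u v : V} (h : D.Adj u v) : reach D u v :=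
  ⟨[(u, v, false)], ⟨rfl, ⟨rfl, h⟩, rfl⟩⟩

lemma sameSCC_refl (x : V) : SameSCC D x x := ⟨reach_refl D x, reach_refl D x⟩

lemma sameSCC_symm {x y : V} (h : SameSCC D x y) : SameSCC D y x := ⟨h.2, h.1⟩

lemma sameSCC_trans {x y z : V} (h1 : SameSCC D x y) (h2 : SameSCC D y z) : SameSCC D x z :=
  ⟨reach_trans D h1.1 h2.1, reach_trans D h2.2 h1.2⟩

lemma walk_mem_reach {a c r : V} {l : List (Step V)} (h : IsWalk D.baseArcs a c l)
    (hr : r ∈ a :: heads l) : reach D a r := by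
  induction l generalizing a with
  | nil => rw [show r = a from by simpa using hr]; exact reach_refl D a
  | cons e l ih =>
    obtain ⟨h0, ⟨hb, hadj⟩, hw⟩ := isWalk_cons.mp h
    rcases List.mem_cons.mp hr with h1 | h1
    · rw [h1]; exact reach_refl D a
    · exact reach_trans D (h0 ▸ reach_adj D hadj) (ih hw h1)

lemma dstar_walk_mem_reach {p q r : V × Bool} {l : List (Step (V × Bool))}
    (h : IsWalk (Dstar D).baseArcs p q l) (hr : r ∈ p :: heads l) : reach D p.1 r.1 := by
  induction l generalizing p with
  | nil => rw [show r = p from by simpa using hr]; exact reach_refl D p.1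
  | cons e l ih =>
    obtain ⟨h0, ⟨hb, hadj⟩, hw⟩ := isWalk_cons.mp h
    rcases List.mem_cons.mp hr with h1 | h1
    · rw [h1]; exact reach_refl D p.1
    · have hstep : reach D e.1.1 e.2.1.1 := by
        rcases hadj with ⟨_, _, hscc⟩ | ⟨_, _, hadj', _⟩
        · exact hscc.1
        · exact reach_adj D hadj'
      exact reach_trans D (h0 ▸ hstep) (ih hw h1)

lemma walk_in_scc {x y : V} : ∀ (l : List (Step V)) (a : V), IsWalk D.baseArcs a y l →
    SameSCC D a x → reach D y x → IsWalk (sccArcs D x) a y l := by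
  intro l
  induction l with
  | nil => intro a h _ _; exact h
  | cons e l ih =>
    intro a h hax hyx
    obtain ⟨h0, ⟨hb, hadj⟩, hw⟩ := isWalk_cons.mp h
    have hvx : SameSCC D e.2.1 x :=
      ⟨reach_trans D ⟨l, hw⟩ hyx, reach_trans D hax.2 (h0 ▸ reach_adj D hadj)⟩
    exact isWalk_cons.mpr ⟨h0, ⟨hb, hadj, h0 ▸ hax, hvx⟩, ih _ hw hvx hyx⟩

lemma scc_walk_mem {x a b r : V} {l : List (Step V)} (h : IsWalk (sccArcs D x) a b l)
    (ha : SameSCC D a x) (hr : r ∈ a :: heads l) : SameSCC D r x := by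
  induction l generalizing a with
  | nil => rwa [show r = a from by simpa using hr]
  | cons e l ih =>
    obtain ⟨h0, he, hw⟩ := isWalk_cons.mp h
    rcases List.mem_cons.mp hr with h1 | h1
    · rwa [h1]
    · exact ih hw he.2.2.2 h1

lemma scc_path_exists {x y : V} (h : SameSCC D x y) : ∃ P, IsPath (sccArcs D x) x y P := by
  obtain ⟨l, hl⟩ := h.1
  exact walk_to_path (walk_in_scc D l x hl (sameSCC_refl D x) h.2)

lemma splice {x y z t : V} {P l : List (Step V)}
    (hP : IsPath (sccArcs D x) x y P) (hxy : SameSCC D x y) (hadj : D.Adj y z)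
    (hyz : ¬ SameSCC D y z) (hl : IsPath D.baseArcs z t l) :
    IsPath D.baseArcs x t (P ++ (y, z, false) :: l) := by
  constructor
  · exact isWalk_append (isWalk_mono (fun u v b hb => ⟨hb.1, hb.2.1⟩) hP.1)
      (isWalk_cons.mpr ⟨rfl, ⟨rfl, hadj⟩, hl.1⟩)
  · have hdisj : List.Disjoint (x :: heads P) (z :: heads l) := by
      intro r h1 h2
      have hs : SameSCC D r x := scc_walk_mem D hP.1 (sameSCC_refl D x) h1
      have h3 : reach D z r := walk_mem_reach D hl.1 h2
      exact hyz ⟨reach_adj D hadj, reach_trans D h3 (reach_trans D hs.1 hxy.1)⟩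
    have hnd : ((x :: heads P) ++ (z :: heads l)).Nodup :=
      List.nodup_append'.mpr ⟨hP.2, hl.2, hdisj⟩
    simpa using hnd

lemma spliceStar {x u v t : V} {l' : List (Step (V × Bool))}
    (hxu : SameSCC D x u) (hadj : D.Adj u v) (hxv : ¬ SameSCC D x v)
    (hl : IsPath (Dstar D).baseArcs (v, false) (t, true) l') :
    IsPath (Dstar D).baseArcs (x, false) (t, true)
      (((x, false), (u, true), false) :: ((u, true), (v, false), false) :: l') := by
  have huv : ¬ SameSCC D u v := fun h => hxv (sameSCC_trans D hxu h)
  constructor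
  · exact isWalk_cons.mpr ⟨rfl, ⟨rfl, Or.inl ⟨rfl, rfl, hxu⟩⟩,
      isWalk_cons.mpr ⟨rfl, ⟨rfl, Or.inr ⟨rfl, rfl, hadj, huv⟩⟩, hl.1⟩⟩
  · have hreach : ∀ r ∈ ((v, false) : V × Bool) :: heads l', reach D v r.1 :=
      fun r hr => dstar_walk_mem_reach D hl.1 hr
    have hnx : ((x, false) : V × Bool) ∉ ((v, false) : V × Bool) :: heads l' := by
      intro hmem
      exact hxv ⟨reach_trans D hxu.1 (reach_adj D hadj), hreach _ hmem⟩
    have hnu : ((u, true) : V × Bool) ∉ ((v, false) : V × Bool) :: heads l' := by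
      intro hmem
      exact huv ⟨reach_adj D hadj, hreach _ hmem⟩
    have h2 : (((u, true) : V × Bool) :: (v, false) :: heads l').Nodup :=
      List.nodup_cons.mpr ⟨hnu, hl.2⟩
    refine List.nodup_cons.mpr ⟨?_, h2⟩
    intro hmem
    rcases List.mem_cons.mp hmem with h | h
    · simp at h
    · exact hnx h

lemma split_scc : ∀ (l : List (Step V)) (x t : V), IsWalk D.baseArcs x t l →
    ¬ SameSCC D x t →
    ∃ pre u v suf, l = pre ++ (u, v, false) :: suf ∧
      IsWalk (sccArcs D x) x u pre ∧ D.Adj u v ∧ SameSCC D x u ∧ ¬ SameSCC D x v ∧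
      IsWalk D.baseArcs v t suf := by
  intro l
  induction l with
  | nil =>
    intro x t h hns
    exact absurd ((show x = t from h) ▸ sameSCC_refl D x) hns
  | cons e l ih =>
    intro x t h hns
    obtain ⟨h0, ⟨hb, hadj⟩, hw⟩ := isWalk_cons.mp h
    by_cases hxv : SameSCC D x e.2.1
    · have hvt : ¬ SameSCC D e.2.1 t := fun hc => hns (sameSCC_trans D hxv hc)
      obtain ⟨pre, u, v, suf, heq, hpre, hadj', hu, hv, hsuf⟩ := ih e.2.1 t hw hvt
      refine ⟨e :: pre, u, v, suf, by rw [heq]; rfl, ?_, hadj', sameSCC_trans D hxv hu,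
        fun hc => hv (sameSCC_trans D (sameSCC_symm D hxv) hc), hsuf⟩
      refine isWalk_cons.mpr ⟨h0, ⟨hb, hadj, ?_, sameSCC_symm D hxv⟩, ?_⟩
      · rw [h0]; exact sameSCC_refl D x
      · exact isWalk_mono (fun a b bb hq =>
          ⟨hq.1, hq.2.1, sameSCC_trans D hq.2.2.1 (sameSCC_symm D hxv),
            sameSCC_trans D hq.2.2.2 (sameSCC_symm D hxv)⟩) hpre
    · have he : e = (x, e.2.1, false) := by
        rw [← h0, ← hb]
      refine ⟨[], x, e.2.1, l, by rw [← he]; rfl, rfl, h0 ▸ hadj, sameSCC_refl D x, hxv, hw⟩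

end SCC

section Main

variable (D : WDigraph V)

lemma fwd_same {x t : V} {l : List (Step V)} (hscc : SameSCC D x t)
    (hp : IsPath D.baseArcs x t l) :
    ∃ l', IsPath (Dstar D).baseArcs (x, false) (t, true) l' ∧
      wSum (Dstar D).impW l' ≤ wSum D.impW l := by
  have hpath : IsPath (sccArcs D x) x t l :=
    ⟨walk_in_scc D l x hp.1 (sameSCC_refl D x) hscc.2, hp.2⟩
  obtain ⟨P, hPp, hPe⟩ := distW_exists (w := D.impW) ⟨l, hpath⟩
  have hle : wSum D.impW P ≤ wSum D.impW l := by
    have h := distW_le (w := D.impW) hpath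
    rw [hPe] at h
    exact EReal.coe_le_coe_iff.mp h
  refine ⟨[((x, false), (t, true), false)], ⟨?_, ?_⟩, ?_⟩
  · exact isWalk_cons.mpr ⟨rfl, ⟨rfl, Or.inl ⟨rfl, rfl, hscc⟩⟩, rfl⟩
  · simp
  · have hW : (Dstar D).impW (x, false) (t, true) false
        = (distW (sccArcs D x) D.impW x t).toReal := by
      simp [WDigraph.impW, Dstar]
    simp only [wSum_cons, wSum_nil, add_zero, hW, hPe, EReal.toReal_coe]
    exact hle

lemma fwd (t : V) :
    ∀ n (l : List (Step V)), l.length ≤ n → ∀ x, IsPath D.baseArcs x t l →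
      ∃ l', IsPath (Dstar D).baseArcs (x, false) (t, true) l' ∧
        wSum (Dstar D).impW l' ≤ wSum D.impW l := by
  intro n
  induction n with
  | zero =>
    intro l hl x hp
    have hnil : l = [] := List.length_eq_zero_iff.mp (Nat.le_zero.mp hl)
    subst hnil
    exact fwd_same D ((show x = t from hp.1) ▸ sameSCC_refl D x) hp
  | succ n ih =>
    intro l hl x hp
    by_cases hscc : SameSCC D x t
    · exact fwd_same D hscc hp
    · obtain ⟨pre, u, v, suf, heq, hpre, hadj, hxu, hxv, hsuf⟩ :=
        split_scc D l x t hp.1 hscc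
      have hnd : (x :: heads l).Nodup := hp.2
      rw [heq] at hnd
      have hnd' : ((x :: heads pre) ++ (v :: heads suf)).Nodup := by
        simpa using hnd
      rw [List.nodup_append] at hnd'
      have hprePath : IsPath (sccArcs D x) x u pre := ⟨hpre, hnd'.1⟩
      have hsufPath : IsPath D.baseArcs v t suf := ⟨hsuf, hnd'.2.1⟩
      have hlen : suf.length ≤ n := by
        rw [heq] at hl; simp at hl; omega
      obtain ⟨l', hl', hle'⟩ := ih suf hlen v hsufPath
      obtain ⟨P, hPp, hPe⟩ := distW_exists (w := D.impW) ⟨pre, hprePath⟩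
      have hleP : wSum D.impW P ≤ wSum D.impW pre := by
        have h := distW_le (w := D.impW) hprePath
        rw [hPe] at h
        exact EReal.coe_le_coe_iff.mp h
      refine ⟨((x, false), (u, true), false) :: ((u, true), (v, false), false) :: l',
        spliceStar D hxu hadj hxv hl', ?_⟩
      have hW1 : (Dstar D).impW (x, false) (u, true) false
          = (distW (sccArcs D x) D.impW x u).toReal := by simp [WDigraph.impW, Dstar]
      have hW2 : (Dstar D).impW (u, true) (v, false) false = D.c u v := by
        simp [WDigraph.impW, Dstar]
      have hW3 : D.impW u v false = D.c u v := by simp [WDigraph.impW]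
      rw [heq]
      simp only [wSum_cons, wSum_append, hW1, hW2, hW3, hPe, EReal.toReal_coe]
      linarith

lemma conv (t : V) :
    ∀ n (l' : List (Step (V × Bool))), l'.length ≤ n → ∀ x,
      IsWalk (Dstar D).baseArcs (x, false) (t, true) l' →
      ∃ l, IsPath D.baseArcs x t l ∧ wSum D.impW l ≤ wSum (Dstar D).impW l' := by
  intro n
  induction n with
  | zero =>
    intro l' hl x hw
    have hnil : l' = [] := List.length_eq_zero_iff.mp (Nat.le_zero.mp hl)
    subst hnil
    have : ((x, false) : V × Bool) = (t, true) := hw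
    simp at this
  | succ n ih =>
    intro l' hl x hw
    cases l' with
    | nil =>
      have : ((x, false) : V × Bool) = (t, true) := hw
      simp at this
    | cons a rest =>
      obtain ⟨ha1, ⟨hb, hadj⟩, hw2⟩ := isWalk_cons.mp hw
      rcases hadj with ⟨h1, h2, hscc⟩ | ⟨h1, _, _, _⟩
      swap
      · rw [ha1] at h1; simp at h1
      -- a.2.1 = (y, true), y := a.2.1.1
      have hay : a.2.1 = (a.2.1.1, true) := by
        rw [← h2]
      have hsccxy : SameSCC D x a.2.1.1 := by
        rw [ha1] at hscc; exact hscc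
      have hWa : (Dstar D).impW a.1 a.2.1 a.2.2
          = (distW (sccArcs D x) D.impW x a.2.1.1).toReal := by
        rw [ha1, hb]
        simp [WDigraph.impW, Dstar]
      cases rest with
      | nil =>
        have hyt : a.2.1 = (t, true) := hw2
        have hyt1 : a.2.1.1 = t := by rw [hyt]
        rw [hyt1] at hsccxy hWa
        obtain ⟨P, hPp, hPe⟩ := distW_exists (w := D.impW) (scc_path_exists D hsccxy)
        refine ⟨P, ⟨isWalk_mono (fun u v b hq => ⟨hq.1, hq.2.1⟩) hPp.1, hPp.2⟩, ?_⟩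
        simp only [wSum_cons, wSum_nil, add_zero, hWa, hPe, EReal.toReal_coe]
        exact le_rfl
      | cons a2 rest2 =>
        obtain ⟨ha2, ⟨hb2, hadj2⟩, hw3⟩ := isWalk_cons.mp hw2
        rcases hadj2 with ⟨h1', _, _⟩ | ⟨_, h2', hadj', hns'⟩
        · rw [ha2, hay] at h1'; simp at h1'
        -- a2.2.1 = (z, false), z := a2.2.1.1
        have haz : a2.2.1 = (a2.2.1.1, false) := by rw [← h2']
        have hadjyz : D.Adj a.2.1.1 a2.2.1.1 := by
          rw [ha2, hay] at hadj'; exact hadj'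
        have hnsyz : ¬ SameSCC D a.2.1.1 a2.2.1.1 := by
          rw [ha2, hay] at hns'; exact hns'
        have hw3' : IsWalk (Dstar D).baseArcs (a2.2.1.1, false) (t, true) rest2 := by
          rw [← haz]; exact hw3
        have hlen : rest2.length ≤ n := by simp at hl; omega
        obtain ⟨l, hlp, hle⟩ := ih rest2 hlen a2.2.1.1 hw3'
        obtain ⟨P, hPp, hPe⟩ := distW_exists (w := D.impW) (scc_path_exists D hsccxy)
        refine ⟨P ++ (a.2.1.1, a2.2.1.1, false) :: l,
          splice D hPp hsccxy hadjyz hnsyz hlp, ?_⟩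
        have hWa2 : (Dstar D).impW a2.1 a2.2.1 a2.2.2 = D.c a.2.1.1 a2.2.1.1 := by
          rw [ha2, hay, hb2]
          simp [WDigraph.impW, Dstar]
        have hW3 : D.impW a.2.1.1 a2.2.1.1 false = D.c a.2.1.1 a2.2.1.1 := by
          simp [WDigraph.impW]
        simp only [wSum_cons, wSum_append, hWa, hWa2, hW3, hPe, EReal.toReal_coe]
        linarith

end Main

/-- Suppose `c` is nearly conservative on every strongly connected component
of `D`.  For any two vertices `s` and `t` lying in distinct strongly connected components,
the minimum weight of a directed path from `s` to `t` in `D` equals the minimum weight of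
a directed path from `a_s` to `b_t` in `D*` (both being `+∞` exactly when `t` is
unreachable from `s`). -/
theorem statement_10 {V : Type} [Fintype V] [DecidableEq V] (D : WDigraph V)
    (hnc : ∀ x : V, NearlyCons (sccArcs D x) D.impW)
    (s t : V) (hst : ¬ SameSCC D s t) :
    distW D.baseArcs D.impW s t =
      distW (Dstar D).baseArcs (Dstar D).impW (s, false) (t, true) := by
  apply le_antisymm
  · refine le_sInf ?_
    rintro b ⟨l', hl', rfl⟩
    obtain ⟨l, hlp, hle⟩ := conv D t l'.length l' le_rfl s hl'.1
    exact le_trans (distW_le (w := D.impW) hlp) (EReal.coe_le_coe_iff.mpr hle)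
  · refine le_sInf ?_
    rintro b ⟨l, hl, rfl⟩
    obtain ⟨l', hl'p, hle⟩ := fwd D t l.length l le_rfl s hl
    exact le_trans (distW_le (w := (Dstar D).impW) hl'p) (EReal.coe_le_coe_iff.mpr hle)

end NearlyConservativePaper
end

section
/- Let D be the improved digraph whose associated undirected graph F is a forest, and let T be a negative tree of D. Then for any two vertices u,v ∈ V(T), there is a directed path from u to v consisting only of loose (added ordinary) arcs whose total weight equals −d^T(v,u). -/
namespace NearlyConservativePaper

variable {V : Type} [Fintype V] [DecidableEq V]

lemma walk_to_loose {V : Type} [Fintype V] [DecidableEq V] (D : WDigraph V) :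
    ∀ {s t : V} (p : D.F.Walk s t),
      IsWalk (fun x y b => b = true ∧ D.Special y x) s t
        (p.darts.map fun d => (d.toProd.1, d.toProd.2, true))
  | _, _, SimpleGraph.Walk.nil => rfl
  | s, t, SimpleGraph.Walk.cons h p =>
      ⟨rfl, ⟨rfl, h.symm.2⟩, walk_to_loose D p⟩

/-- Let `T` be the negative tree of the forest `F` containing `t₀`, and let
`u, v ∈ V(T)`.  Then there is a directed path from `u` to `v` consisting only of loose
(added ordinary) arcs whose total weight equals `−d^T(v,u)`. -/
theorem statement_14 {V : Type} [Fintype V] [DecidableEq V] (D : WDigraph V)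
    (hloop : ∀ v, ¬ D.Adj v v) (hforest : D.F.IsAcyclic)
    (t₀ : V) (hT : ∃ y, D.F.Adj t₀ y)
    (u v : V) (hu : D.F.Reachable t₀ u) (hv : D.F.Reachable t₀ v)
    (q : D.F.Walk v u) (hq : q.IsPath) :
    ∃ l : List (Step V),
      IsWalk (fun x y b => b = true ∧ D.Special y x) u v l ∧
      (u :: heads l).Nodup ∧
      wSum D.impW l = -(D.fWeight q) := by
  refine ⟨(q.reverse.darts.map fun d => (d.toProd.1, d.toProd.2, true)),
    walk_to_loose D _, ?_, ?_⟩
  · have hh : heads ((q.reverse.darts.map fun d => (d.toProd.1, d.toProd.2, true)))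
        = q.reverse.support.tail := by
      unfold heads
      rw [List.map_map]
      exact q.reverse.map_snd_darts
    rw [hh]
    have := hq.reverse.support_nodup
    rwa [q.reverse.support_eq_cons] at this
  · unfold wSum WDigraph.fWeight WDigraph.impW
    rw [List.map_map, SimpleGraph.Walk.darts_reverse, List.map_reverse,
      List.sum_reverse, List.map_map]
    simp only [Function.comp_def, SimpleGraph.Dart.symm_toProd, Prod.fst_swap, Prod.snd_swap,
      if_pos rfl]
    simp [← List.sum_map_mul_left]
    induction q.darts with
    | nil => simp
    | cons d l ih => simp [ih]; ring

end NearlyConservativePaper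
end
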